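/- arXiv:1405.4445 — 5 statements merged into one kernel-verified Lean document; each statement's English description precedes it below -/
import Mathlib

section
/- For every natural number n and integer a ≥ 1, ∑_{k=0}^{n} C(n,k) C(n+k,k) a^k equals the constant term of the Laurent polynomial ((1+x)(a + (a+1)x)/x)^n. -/
/-!
Since `a + (a + 1) x = a (1 + x) + x`, the Laurent polynomial is `a (1 + x)² x⁻¹ + (1 + x)`, and
the binomial theorem gives
`((1 + x) (a + (a + 1) x) / x) ^ n = ∑ₖ C(n, k) aᵏ (1 + x) ^ (n + k) x⁻ᵏ`.
The constant term of `(1 + x) ^ (n + k) x⁻ᵏ` is the coefficient of `xᵏ` in `(1 + x) ^ (n + k)`,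
namely `C(n + k, k)`.
-/

open Finset

lemma smul_sq_mul_add_pow {R A : Type*} [CommSemiring R] [CommSemiring A] [Algebra R A]
    (r : R) (u y : A) (n : ℕ) :
    (r • (u ^ 2 * y) + u) ^ n =
      ∑ k ∈ range (n + 1), (n.choose k * r ^ k) • (u ^ (n + k) * y ^ k) := by
  rw [add_pow]
  refine sum_congr rfl fun k hk => ?_
  have hnk : n + k = 2 * k + (n - k) := by have := mem_range.mp hk; omega
  simp only [Algebra.smul_def, map_mul, map_pow, map_natCast, hnk, pow_add, pow_mul]
  ring

namespace LaurentPolynomial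

variable {R : Type*}

section Semiring

variable [Semiring R]

lemma coeff_mul_T (f : R[T;T⁻¹]) (m n : ℤ) : (f * T n).coeff m = f.coeff (m - n) := by
  rw [T, AddMonoidAlgebra.coeff_mul_single_apply, mul_one, sub_eq_add_neg]

open Polynomial in
lemma coeff_toLaurent_natCast (f : R[X]) (k : ℕ) : (toLaurent f).coeff k = f.coeff k := by
  rw [coeff_toLaurent, ← Nat.castEmbedding_apply,
    Finsupp.mapDomain_apply Nat.castEmbedding.injective]
  rfl

open Polynomial in
lemma coeff_one_add_T_pow (m k : ℕ) : ((1 + T 1 : R[T;T⁻¹]) ^ m).coeff k = m.choose k := by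
  rw [← toLaurent_X, ← map_one toLaurent, ← map_add, ← map_pow, coeff_toLaurent_natCast,
    coeff_one_add_X_pow]

end Semiring

lemma one_add_T_mul_C_add_C_mul_T_mul_T_neg_one [CommSemiring R] (a : R) :
    (1 + T 1) * (C a + C (a + 1) * T 1) * T (-1) =
      a • ((1 + T 1) ^ 2 * T (-1)) + (1 + T 1 : R[T;T⁻¹]) := by
  calc _ = C a * ((1 + T 1) ^ 2 * T (-1)) + (1 + T 1) * (T 1 * T (-1) : R[T;T⁻¹]) := by
        rw [map_add, map_one]; ring
    _ = _ := by rw [smul_eq_C_mul, ← T_add, add_neg_cancel, T_zero, mul_one]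

end LaurentPolynomial

open LaurentPolynomial in
theorem sum_eq_constant_term_general (n : ℕ) (a : ℤ) :
    (∑ k ∈ Finset.range (n + 1), (n.choose k : ℤ) * ((n + k).choose k : ℤ) * a ^ k) =
      ((((1 + T 1) * (C a + C (a + 1) * T 1) * T (-1) : LaurentPolynomial ℤ)) ^ n).coeff 0 := by
  rw [one_add_T_mul_C_add_C_mul_T_mul_T_neg_one, smul_sq_mul_add_pow,
    AddMonoidAlgebra.coeff_sum, Finsupp.finsetSum_apply]
  refine sum_congr rfl fun k _ => ?_
  rw [AddMonoidAlgebra.coeff_smul_apply, T_pow, mul_neg_one, coeff_mul_T, zero_sub, neg_neg,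
    coeff_one_add_T_pow, smul_eq_mul]
  ring

open LaurentPolynomial in
theorem sum_eq_constant_term (n : ℕ) (a : ℤ) (ha : 1 ≤ a) :
    (∑ k ∈ Finset.range (n + 1), (n.choose k : ℤ) * ((n + k).choose k : ℤ) * a ^ k) =
      ((((1 + T 1) * (C a + C (a + 1) * T 1) * T (-1) : LaurentPolynomial ℤ)) ^ n).coeff 0 :=
  sum_eq_constant_term_general n a
end

section
/- The sequence q(n) = ∑_{k=0}^{n} C(n,k) C(n+k,k) (the denominators in Apéry's proof of the irrationality of ln 2) satisfies the recurrence (n+2)q(n+2) − (6n+9)q(n+1) + (n+1)q(n) = 0 with q(0)=1, q(1)=3. -/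
/-!
Creative telescoping: the summand `F n k = C(n,k) C(n+k,k)` satisfies
`(n+1)(n+2) ((n+2) F (n+2) k - (6n+9) F (n+1) k + (n+1) F n k) = (4n+6) (G n k - G n (k+1))`
with certificate `G n k = k² C(n+2,k) C(n+k,k)`. Dividing by `C(n+2,k) C(n+k,k)` turns this into an
identity of rational functions in `n` and `k`. Summing over `k ≤ n+2` telescopes to
`(4n+6) (G n 0 - G n (n+3)) = 0`, and `(n+1)(n+2) ≠ 0`.
-/

open Finset

namespace Nat

variable {R : Type*} [CommRing R]

theorem cast_choose_mul_succ (m k : ℕ) :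
    (m.choose k : R) * (m + 1) = ((m + 1).choose k : R) * (m + 1 - k) := by
  rcases le_or_gt k (m + 1) with h | h
  · have := congrArg (Nat.cast : ℕ → R) (choose_mul_succ_eq m k)
    push_cast [h] at this
    exact this
  · simp [choose_eq_zero_of_lt h, choose_eq_zero_of_lt (h.trans' (lt_add_one m))]

theorem cast_choose_succ_right_mul (m k : ℕ) :
    (m.choose (k + 1) : R) * (k + 1) = (m.choose k : R) * (m - k) := by
  rcases le_or_gt k m with h | h
  · have := congrArg (Nat.cast : ℕ → R) (choose_succ_right_eq m k)
    push_cast [h] at this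
    exact this
  · simp [choose_eq_zero_of_lt h, choose_eq_zero_of_lt (h.trans (lt_add_one k))]

theorem add_one_add_choose_mul (m k : ℕ) :
    (m + 1 + k).choose k * (m + 1) = (m + k).choose k * (m + 1 + k) := by
  have h := choose_mul_succ_eq (m + k) k
  rw [show m + k + 1 - k = m + 1 by omega, show m + k + 1 = m + 1 + k by omega] at h
  exact h.symm

end Nat

def lnTwoTerm (n k : ℕ) : ℤ := n.choose k * (n + k).choose k

def lnTwoCertificate (n k : ℕ) : ℤ := k ^ 2 * (n + 2).choose k * (n + k).choose k

theorem lnTwoTerm_creative_telescoping (n k : ℕ) :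
    ((n : ℤ) + 1) * (n + 2) * ((n + 2) * lnTwoTerm (n + 2) k - (6 * n + 9) * lnTwoTerm (n + 1) k
      + (n + 1) * lnTwoTerm n k) = (4 * n + 6) * (lnTwoCertificate n k - lnTwoCertificate n (k + 1)) := by
  rw [← Int.cast_inj (α := ℚ)]
  simp only [lnTwoTerm, lnTwoCertificate, show n + (k + 1) = n + 1 + k by ring]
  push_cast
  have e1 : ((n + 1 + k).choose k : ℚ) * (n + 1) = ((n + k).choose k : ℚ) * (n + 1 + k) := by
    exact_mod_cast Nat.add_one_add_choose_mul n k
  have e2 : ((n + 2 + k).choose k : ℚ) * (n + 2) = (n + 1 + k).choose k * (n + 2 + k) := by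
    exact_mod_cast Nat.add_one_add_choose_mul (n + 1) k
  have e3 : ((n + 1).choose k : ℚ) * (n + 2) = ((n + 2).choose k : ℚ) * (n + 2 - k) := by
    have := Nat.cast_choose_mul_succ (R := ℚ) (n + 1) k
    push_cast at this
    linear_combination this
  have e4 := Nat.cast_choose_mul_succ (R := ℚ) n k
  have e5 := Nat.cast_choose_succ_right_mul (R := ℚ) (n + 2) k
  have e6 : ((n + 1 + k).choose (k + 1) : ℚ) * (k + 1) = ((n + k).choose k : ℚ) * (n + 1 + k) := by
    have := congrArg (Nat.cast : ℕ → ℚ) (Nat.add_one_mul_choose_eq (n + k) k)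
    rw [Nat.add_right_comm n k 1] at this
    push_cast at this
    linear_combination -this
  push_cast at e4 e5
  have h1 : ((n + 1 + k).choose k : ℚ) = ((n + k).choose k : ℚ) * (n + 1 + k) / (n + 1) := by
    rw [eq_div_iff (by positivity)]; exact e1
  have h2 : ((n + 2 + k).choose k : ℚ) =
      ((n + k).choose k : ℚ) * (n + 1 + k) * (n + 2 + k) / ((n + 1) * (n + 2)) := by
    rw [eq_div_iff (by positivity)]; linear_combination (n + 1 : ℚ) * e2 + (n + 2 + k : ℚ) * e1
  have h3 : ((n + 1).choose k : ℚ) = ((n + 2).choose k : ℚ) * (n + 2 - k) / (n + 2) := by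
    rw [eq_div_iff (by positivity)]; exact e3
  have h4 : (n.choose k : ℚ) =
      ((n + 2).choose k : ℚ) * (n + 2 - k) * (n + 1 - k) / ((n + 1) * (n + 2)) := by
    rw [eq_div_iff (by positivity)]; linear_combination (n + 2 : ℚ) * e4 + (n + 1 - k : ℚ) * e3
  have h5 : ((n + 2).choose (k + 1) : ℚ) = ((n + 2).choose k : ℚ) * (n + 2 - k) / (k + 1) := by
    rw [eq_div_iff (by positivity)]; exact e5
  have h6 : ((n + 1 + k).choose (k + 1) : ℚ) = ((n + k).choose k : ℚ) * (n + 1 + k) / (k + 1) := by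
    rw [eq_div_iff (by positivity)]; exact e6
  rw [h1, h2, h3, h4, h5, h6]
  field_simp
  ring

theorem sum_range_lnTwoTerm_of_le {n m : ℕ} (h : n ≤ m) :
    ∑ k ∈ range (m + 1), lnTwoTerm n k = ∑ k ∈ range (n + 1), lnTwoTerm n k := by
  refine (sum_subset (range_subset_range.2 (by omega)) fun k _ hkn => ?_).symm
  simp only [mem_range, not_lt] at hkn
  simp [lnTwoTerm, Nat.choose_eq_zero_of_lt (Nat.lt_of_succ_le hkn)]

theorem ln2_recurrence (q : ℕ → ℤ)
    (hq : ∀ n : ℕ, q n = ∑ k ∈ Finset.range (n + 1),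
      (n.choose k : ℤ) * ((n + k).choose k : ℤ)) :
    q 0 = 1 ∧ q 1 = 3 ∧ ∀ n : ℕ,
      ((n : ℤ) + 2) * q (n + 2) - (6 * (n : ℤ) + 9) * q (n + 1) + ((n : ℤ) + 1) * q n = 0 := by
  refine ⟨by simp [hq], by simp [hq, sum_range_succ], fun n => ?_⟩
  have hq' (m : ℕ) (hm : m ≤ n + 2) : q m = ∑ k ∈ range (n + 3), lnTwoTerm m k :=
    (hq m).trans (sum_range_lnTwoTerm_of_le hm).symm
  have htelescope : ((n : ℤ) + 1) * (n + 2) *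
      ((n + 2) * q (n + 2) - (6 * n + 9) * q (n + 1) + (n + 1) * q n) = 0 := calc
    _ = ∑ k ∈ range (n + 3), ((n : ℤ) + 1) * (n + 2) * ((n + 2) * lnTwoTerm (n + 2) k
          - (6 * n + 9) * lnTwoTerm (n + 1) k + (n + 1) * lnTwoTerm n k) := by
      rw [hq' n (by omega), hq' (n + 1) (by omega), hq' (n + 2) le_rfl]
      simp only [mul_sum, ← sum_sub_distrib, ← sum_add_distrib]
    _ = ∑ k ∈ range (n + 3), (4 * n + 6) * (lnTwoCertificate n k - lnTwoCertificate n (k + 1)) :=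
      sum_congr rfl fun k _ => lnTwoTerm_creative_telescoping n k
    _ = (4 * n + 6) * (lnTwoCertificate n 0 - lnTwoCertificate n (n + 3)) := by
      rw [← mul_sum, sum_range_sub']
    _ = 0 := by simp [lnTwoCertificate]
  exact (mul_eq_zero.mp htelescope).resolve_left (by positivity)
end

section
/- The sequence q(n) = ∑_{k=0}^{n} C(n,k)^2 C(n+k,k) satisfies the recurrence (n+2)^2 q(n+2) − (11n^2 + 33n + 25) q(n+1) − (n+1)^2 q(n) = 0 with q(0)=1, q(1)=3. -/
/-!
Creative telescoping (Zeilberger). With `F n k = C(n,k)² C(n+k,k)`, the combination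
`(n+2)² F (n+2) k - (11n² + 33n + 25) F (n+1) k - (n+1)² F n k` equals `G n (k+1) - G n k` for an
explicit certificate `G`, so summing over `k` telescopes to a boundary term that vanishes. The
termwise identity is checked by writing every binomial coefficient in it as a rational function of
`n, k` times one of two fixed binomials; all denominators are positive, so no case split on the
position of `k` relative to `n` is needed.
-/

open Finset

section ChooseRatios

variable {K : Type*} [Field K] [CharZero K]

theorem Nat.cast_choose_eq_div_mul_choose_succ_left (n k : ℕ) :
    (n.choose k : K) = (n + 1 - k) / (n + 1) * ((n + 1).choose k : K) := by
  rw [div_mul_eq_mul_div, eq_div_iff (Nat.cast_add_one_ne_zero n)]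
  rcases le_or_gt k (n + 1) with hkn | hnk
  · have h := congrArg (Nat.cast (R := K)) (Nat.choose_mul_succ_eq n k)
    push_cast [hkn] at h
    linear_combination h
  · simp [Nat.choose_eq_zero_of_lt hnk, Nat.choose_eq_zero_of_lt (Nat.lt_of_succ_lt hnk)]

theorem Nat.cast_choose_eq_div_mul_choose_succ_succ (n k : ℕ) :
    (n.choose k : K) = (k + 1) / (n + 1) * ((n + 1).choose (k + 1) : K) := by
  rw [div_mul_eq_mul_div, eq_div_iff (Nat.cast_add_one_ne_zero n)]
  have h := congrArg (Nat.cast (R := K)) (Nat.add_one_mul_choose_eq n k)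
  push_cast at h
  linear_combination h

end ChooseRatios

def aperyTerm (n k : ℕ) : ℤ := (n.choose k : ℤ) ^ 2 * ((n + k).choose k : ℤ)

def aperyB (n : ℕ) : ℤ := ∑ k ∈ range (n + 1), aperyTerm n k

def aperyCertCoeff (n k : ℕ) : ℤ := (k : ℤ) ^ 2 + 6 * n * k + 7 * k - 11 * n ^ 2 - 37 * n - 30

/-- The certificate `G` found by Zeilberger's algorithm for this sum. -/
def aperyCert (n : ℕ) : ℕ → ℤ
  | 0 => 0
  | k + 1 => aperyCertCoeff n (k + 1) * aperyTerm (n + 1) k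

theorem aperyTerm_recurrence (n k : ℕ) :
    ((n : ℤ) + 2) ^ 2 * aperyTerm (n + 2) k
      - (11 * (n : ℤ) ^ 2 + 33 * n + 25) * aperyTerm (n + 1) k
      - ((n : ℤ) + 1) ^ 2 * aperyTerm n k = aperyCert n (k + 1) - aperyCert n k := by
  rcases k with _ | j
  · simp only [aperyTerm, aperyCert, aperyCertCoeff, Nat.choose_zero_right]
    push_cast
    ring
  · simp only [aperyTerm, aperyCert, aperyCertCoeff]
    qify
    rw [show n + 2 + (j + 1) = n + j + 1 + 1 + 1 by omega,
      show n + 1 + (j + 1) = n + j + 1 + 1 by omega, show n + (j + 1) = n + j + 1 by omega,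
      show n + 1 + j = n + j + 1 by omega, show n + 2 = n + 1 + 1 from rfl]
    -- everything becomes a multiple of `C(n+2, j+1)` or `C(n+j+3, j+1)`
    rw [Nat.cast_choose_eq_div_mul_choose_succ_left n,
      Nat.cast_choose_eq_div_mul_choose_succ_left (n + 1),
      Nat.cast_choose_eq_div_mul_choose_succ_succ (n + 1),
      Nat.cast_choose_eq_div_mul_choose_succ_left (n + j + 1),
      Nat.cast_choose_eq_div_mul_choose_succ_succ (n + j + 1),
      Nat.cast_choose_eq_div_mul_choose_succ_left (n + j + 1 + 1)]
    push_cast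
    field_simp
    ring

theorem aperyB_eq_sum_range {n N : ℕ} (h : n < N) : aperyB n = ∑ k ∈ range N, aperyTerm n k := by
  refine sum_subset (range_subset_range.mpr h) fun k _ hk => ?_
  simp [aperyTerm, Nat.choose_eq_zero_of_lt (not_lt.mp (mt mem_range.mpr hk))]

theorem aperyB_recurrence (n : ℕ) :
    ((n : ℤ) + 2) ^ 2 * aperyB (n + 2) - (11 * (n : ℤ) ^ 2 + 33 * n + 25) * aperyB (n + 1)
      - ((n : ℤ) + 1) ^ 2 * aperyB n = 0 := by
  rw [aperyB_eq_sum_range (N := n + 3) (by omega), aperyB_eq_sum_range (N := n + 3) (by omega),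
    aperyB_eq_sum_range (N := n + 3) (by omega), mul_sum, mul_sum, mul_sum,
    ← sum_sub_distrib, ← sum_sub_distrib]
  simp only [aperyTerm_recurrence]
  rw [sum_range_sub]
  simp [aperyCert, aperyTerm]

theorem zeta2_recurrence (q : ℕ → ℤ)
    (hq : ∀ n : ℕ, q n = ∑ k ∈ Finset.range (n + 1),
      (n.choose k : ℤ) ^ 2 * ((n + k).choose k : ℤ)) :
    q 0 = 1 ∧ q 1 = 3 ∧ ∀ n : ℕ,
      ((n : ℤ) + 2) ^ 2 * q (n + 2) - (11 * (n : ℤ) ^ 2 + 33 * (n : ℤ) + 25) * q (n + 1) -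
        ((n : ℤ) + 1) ^ 2 * q n = 0 := by
  obtain rfl : q = aperyB := funext hq
  exact ⟨by decide, by decide, aperyB_recurrence⟩
end

section
/- The sequence q(n) = ∑_{k=0}^{n} C(n,k)^2 C(n+k,k)^2 (the Apéry numbers) satisfies the recurrence (n+2)^3 q(n+2) − (2n+3)(17n^2 + 51n + 39) q(n+1) + (n+1)^3 q(n) = 0 with q(0)=1, q(1)=5. -/
/-!
Creative telescoping: the summand `F(n, k)` satisfies the recurrence in `n` up to a difference
`G(n, k + 1) - G(n, k)` in `k`, where `G(n, k)` is an explicit multiple of `F(n + 1, k - 1)`.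
Summing over `k` from `0` to `n + 2`, the right-hand sides telescope to `G(n, n + 3) - G(n, 0) = 0`.
-/

open Finset

section CastChoose

variable {K : Type*} [Field K] [CharZero K]

theorem Nat.cast_choose_succ_succ (n k : ℕ) :
    ((n + 1).choose (k + 1) : K) = (n + 1) / (k + 1) * n.choose k := by
  have h : ((n + 1 : ℕ) * n.choose k : K) = (n + 1).choose (k + 1) * (k + 1 : ℕ) := by
    exact_mod_cast Nat.add_one_mul_choose_eq n k
  push_cast at h
  field_simp
  linear_combination -h

theorem Nat.cast_choose_succ_right (n k : ℕ) :
    (n.choose (k + 1) : K) = (n - k) / (k + 1) * n.choose k := by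
  rcases le_or_gt k n with hkn | hnk
  · have h : (n.choose (k + 1) * (k + 1 : ℕ) : K) = n.choose k * (n - k : ℕ) := by
      exact_mod_cast Nat.choose_succ_right_eq n k
    push_cast [hkn] at h
    field_simp
    linear_combination h
  · simp [Nat.choose_eq_zero_of_lt hnk, Nat.choose_eq_zero_of_lt (hnk.trans k.lt_succ_self)]

theorem Nat.cast_choose_eq_mul_choose_succ (n k : ℕ) :
    (n.choose k : K) = (n + 1 - k) / (n + 1) * (n + 1).choose k := by
  rcases le_or_gt k (n + 1) with hkn | hnk
  · have h : (n.choose k * (n + 1 : ℕ) : K) = (n + 1).choose k * (n + 1 - k : ℕ) := by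
      exact_mod_cast Nat.choose_mul_succ_eq n k
    push_cast [hkn] at h
    field_simp
    linear_combination h
  · simp [Nat.choose_eq_zero_of_lt hnk, Nat.choose_eq_zero_of_lt (n.lt_succ_self.trans hnk)]

end CastChoose

def aperySummand (n k : ℕ) : ℤ := (n.choose k : ℤ) ^ 2 * ((n + k).choose k : ℤ) ^ 2

/-- Apéry's certificate, as produced by Zeilberger's algorithm. -/
def aperyCertificate (n : ℕ) : ℕ → ℤ
  | 0 => 0
  | k + 1 => 4 * (2 * n + 3) * (2 * k ^ 2 + k - (2 * n + 3) ^ 2) * aperySummand (n + 1) k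

theorem aperySummand_eq_zero_of_lt {n k : ℕ} (h : n < k) : aperySummand n k = 0 := by
  simp [aperySummand, Nat.choose_eq_zero_of_lt h]

theorem sum_range_aperySummand_of_lt {n m : ℕ} (h : n < m) :
    ∑ k ∈ range m, aperySummand n k = ∑ k ∈ range (n + 1), aperySummand n k := by
  refine (sum_subset (range_subset_range.2 h) fun k _ hk => ?_).symm
  exact aperySummand_eq_zero_of_lt (by simpa using hk)

theorem aperySummand_recurrence (n k : ℕ) :
    ((n : ℤ) + 2) ^ 3 * aperySummand (n + 2) k
      - (2 * (n : ℤ) + 3) * (17 * (n : ℤ) ^ 2 + 51 * (n : ℤ) + 39) * aperySummand (n + 1) k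
      + ((n : ℤ) + 1) ^ 3 * aperySummand n k
      = aperyCertificate n (k + 1) - aperyCertificate n k := by
  rcases k with _ | j
  · simp [aperySummand, aperyCertificate]
    ring
  · simp only [aperySummand, aperyCertificate]
    qify
    rw [show n + 2 + (j + 1) = n + j + 3 by omega, show n + 1 + (j + 1) = n + j + 2 by omega,
      show n + (j + 1) = n + j + 1 by omega, show n + 1 + j = n + j + 1 by omega]
    -- Every binomial coefficient becomes a rational multiple of `C(n+1, j)` or `C(n+j+2, j)`,
    -- leaving an identity of rational functions of `n` and `j`.
    have hA2 := Nat.cast_choose_succ_succ (K := ℚ) (n + 1) j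
    have hA1 := Nat.cast_choose_succ_right (K := ℚ) (n + 1) j
    have hA0 := Nat.cast_choose_eq_mul_choose_succ (K := ℚ) n (j + 1)
    have hB2 := Nat.cast_choose_succ_succ (K := ℚ) (n + j + 2) j
    have hB1 := Nat.cast_choose_succ_right (K := ℚ) (n + j + 2) j
    have hB0 := Nat.cast_choose_eq_mul_choose_succ (K := ℚ) (n + j + 1) (j + 1)
    have hB := Nat.cast_choose_eq_mul_choose_succ (K := ℚ) (n + j + 1) j
    push_cast at hA2 hA1 hA0 hB2 hB1 hB0 hB ⊢
    rw [hA0, hA2, hA1, hB0, hB2, hB1, hB]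
    field_simp
    ring

theorem apery_recurrence (q : ℕ → ℤ)
    (hq : ∀ n : ℕ, q n = ∑ k ∈ Finset.range (n + 1),
      (n.choose k : ℤ) ^ 2 * ((n + k).choose k : ℤ) ^ 2) :
    q 0 = 1 ∧ q 1 = 5 ∧ ∀ n : ℕ,
      ((n : ℤ) + 2) ^ 3 * q (n + 2) -
        (2 * (n : ℤ) + 3) * (17 * (n : ℤ) ^ 2 + 51 * (n : ℤ) + 39) * q (n + 1) +
        ((n : ℤ) + 1) ^ 3 * q n = 0 := by
  refine ⟨by simp [hq], by simp [hq, sum_range_succ], fun n => ?_⟩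
  have hq_range : ∀ m ≤ n + 2, q m = ∑ k ∈ range (n + 3), aperySummand m k := fun m hm =>
    (hq m).trans (sum_range_aperySummand_of_lt (by omega)).symm
  rw [hq_range n (by omega), hq_range (n + 1) (by omega), hq_range (n + 2) le_rfl,
    mul_sum, mul_sum, mul_sum, ← sum_sub_distrib, ← sum_add_distrib,
    sum_congr rfl fun k _ => aperySummand_recurrence n k, sum_range_sub]
  simp [aperyCertificate, aperySummand_eq_zero_of_lt]
end

section
/- For rational a > 0, a ≠ 1, and every natural number n, the integral I(n) = ∫_0^1 (x(1−x)/(1−(1−a)x))^n / (1−(1−a)x) dx is a linear combination r(n) + s(n)·ln(a) with rational coefficients r(n), s(n). -/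
/-!
Put `u = 1 - (1 - a) x`. Then `(1 - a)² x (1 - x) = -u² + (1 + a) u - a`, so the integrals
`J(n, m) = ∫₀¹ (x (1 - x))ⁿ uᵐ` satisfy
`(1 - a)² J(n + 1, m) = (1 + a) J(n, m + 1) - J(n, m + 2) - a J(n, m)`.
This reduces everything to `J(0, m) = ∫₀¹ uᵐ`, which is rational for `m ≠ -1` and a rational
multiple of `log a` for `m = -1`. The theorem is the case `m = -(n + 1)`.
-/

open intervalIntegral Real

noncomputable def ratLogSpan (a : ℝ) : Submodule ℚ ℝ :=
  Submodule.span ℚ {1, log a}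

lemma mem_ratLogSpan_iff {a y : ℝ} :
    y ∈ ratLogSpan a ↔ ∃ r s : ℚ, y = r + s * log a := by
  simp only [ratLogSpan, Submodule.mem_span_pair, Rat.smul_def, mul_one, eq_comm]

lemma one_sub_one_sub_mul_pos {a x : ℝ} (ha : 0 < a) (hx : x ∈ Set.uIcc (0 : ℝ) 1) :
    0 < 1 - (1 - a) * x := by
  rw [Set.uIcc_of_le zero_le_one] at hx
  rcases hx.1.eq_or_lt with rfl | hx0
  · norm_num
  · nlinarith [mul_pos ha hx0, hx.2]

noncomputable def weightedBetaIntegral (a : ℝ) (n : ℕ) (m : ℤ) : ℝ :=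
  ∫ x in (0 : ℝ)..1, (x * (1 - x)) ^ n * (1 - (1 - a) * x) ^ m

lemma intervalIntegrable_weightedBeta {a : ℝ} (ha : 0 < a) (n : ℕ) (m : ℤ) :
    IntervalIntegrable (fun x : ℝ => (x * (1 - x)) ^ n * (1 - (1 - a) * x) ^ m)
      MeasureTheory.volume 0 1 :=
  ContinuousOn.intervalIntegrable <| by
    refine (Continuous.continuousOn (by fun_prop)).mul (ContinuousOn.zpow₀ (by fun_prop) m ?_)
    exact fun x hx => Or.inl (one_sub_one_sub_mul_pos ha hx).ne'

lemma weightedBetaIntegral_zero_mem_ratLogSpan {a : ℚ} (ha : 0 < a) (ha1 : a ≠ 1) (m : ℤ) :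
    weightedBetaIntegral a 0 m ∈ ratLogSpan a := by
  have haR : (0 : ℝ) < a := by exact_mod_cast ha
  have hc : (1 : ℝ) - a ≠ 0 := sub_ne_zero.2 (by exact_mod_cast ha1.symm)
  have hsub : ∫ x in (0 : ℝ)..1, (1 - (1 - (a : ℝ)) * x) ^ m
      = (1 - (a : ℝ))⁻¹ * ∫ y in (a : ℝ)..1, y ^ m := by
    rw [integral_comp_sub_mul (fun y : ℝ => y ^ m) hc, smul_eq_mul]
    norm_num
  simp only [weightedBetaIntegral, pow_zero, one_mul, hsub]
  rcases eq_or_ne m (-1) with rfl | hm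
  · rw [mem_ratLogSpan_iff]
    refine ⟨0, -(1 - a)⁻¹, ?_⟩
    simp_rw [zpow_neg_one]
    rw [integral_inv_of_pos haR one_pos, one_div, log_inv]
    push_cast
    ring
  · rw [integral_zpow (Or.inr ⟨hm, Set.notMem_uIcc_of_lt haR one_pos⟩), one_zpow,
      mem_ratLogSpan_iff]
    refine ⟨(1 - a)⁻¹ * ((1 - a ^ (m + 1)) / (m + 1)), 0, ?_⟩
    push_cast
    ring

lemma sq_one_sub_mul_weightedBetaIntegral_succ {a : ℝ} (ha : 0 < a) (n : ℕ) (m : ℤ) :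
    (1 - a) ^ 2 * weightedBetaIntegral a (n + 1) m
      = (1 + a) * weightedBetaIntegral a n (m + 1) - weightedBetaIntegral a n (m + 2)
        - a * weightedBetaIntegral a n m := by
  set g : ℤ → ℝ → ℝ := fun k x => (x * (1 - x)) ^ n * (1 - (1 - a) * x) ^ k
  have hg : ∀ k, IntervalIntegrable (g k) MeasureTheory.volume 0 1 :=
    intervalIntegrable_weightedBeta ha n
  have hpoint : Set.EqOn
      (fun x => (1 - a) ^ 2 * ((x * (1 - x)) ^ (n + 1) * (1 - (1 - a) * x) ^ m))
      (fun x => (1 + a) * g (m + 1) x - g (m + 2) x - a * g m x) (Set.uIcc 0 1) := by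
    intro x hx
    have hu := (one_sub_one_sub_mul_pos ha hx).ne'
    simp only [g, zpow_add₀ hu, zpow_one, zpow_two]
    ring
  calc (1 - a) ^ 2 * weightedBetaIntegral a (n + 1) m
      = ∫ x in (0 : ℝ)..1, (1 + a) * g (m + 1) x - g (m + 2) x - a * g m x := by
        rw [weightedBetaIntegral, ← integral_const_mul, integral_congr hpoint]
    _ = _ := by
        rw [integral_sub (((hg _).const_mul _).sub (hg _)) ((hg _).const_mul _),
          integral_sub ((hg _).const_mul _) (hg _), integral_const_mul, integral_const_mul]
        rfl

lemma weightedBetaIntegral_mem_ratLogSpan {a : ℚ} (ha : 0 < a) (ha1 : a ≠ 1) (n : ℕ) (m : ℤ) :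
    weightedBetaIntegral a n m ∈ ratLogSpan a := by
  induction n generalizing m with
  | zero => exact weightedBetaIntegral_zero_mem_ratLogSpan ha ha1 m
  | succ n ih =>
    have hc : ((1 : ℝ) - a) ^ 2 ≠ 0 := pow_ne_zero 2 (sub_ne_zero.2 (by exact_mod_cast ha1.symm))
    have hrec : weightedBetaIntegral a (n + 1) m = ((1 - a) ^ 2)⁻¹ •
        ((1 + a) • weightedBetaIntegral a n (m + 1) - weightedBetaIntegral a n (m + 2)
          - a • weightedBetaIntegral a n m) := by
      simp only [Rat.smul_def]
      push_cast
      rw [← sq_one_sub_mul_weightedBetaIntegral_succ (by exact_mod_cast ha),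
        inv_mul_cancel_left₀ hc]
    rw [hrec]
    exact Submodule.smul_mem _ _ <| sub_mem (sub_mem (Submodule.smul_mem _ _ (ih _)) (ih _))
      (Submodule.smul_mem _ _ (ih _))

theorem I_rational_combination (a : ℚ) (ha : 0 < a) (ha1 : a ≠ 1) (n : ℕ) :
    ∃ r s : ℚ,
      (∫ x in (0:ℝ)..1,
        (x * (1 - x) / (1 - (1 - (a : ℝ)) * x)) ^ n / (1 - (1 - (a : ℝ)) * x))
        = (r : ℝ) + (s : ℝ) * Real.log a := by
  rw [← mem_ratLogSpan_iff]
  convert weightedBetaIntegral_mem_ratLogSpan ha ha1 n (-(n + 1 : ℕ)) using 1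
  refine integral_congr fun x _ => ?_
  rw [zpow_neg, zpow_natCast, div_pow, div_div, ← pow_succ, div_eq_mul_inv]
end
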